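/- arXiv:1712.08428 — 4 statements merged into one kernel-verified Lean document; each statement's English description precedes it below -/
import Mathlib

section
/- For any source n and any two strategy profiles ψ and ψ' that agree at every coordinate k ≠ n, the change in the relay utility of source n equals the change in the global satisfaction: U_n(ψ') − U_n(ψ) = Λ(ψ') − Λ(ψ). In other words, the global satisfaction Λ is an exact potential function for the relay utilities U_n. -/
open Real Finset

/-- Number of sources selecting radio `c` under profile `ψ`. -/
def occ {N : ℕ} {C : Type*} [Fintype C] [DecidableEq C]
    (ψ : Fin N → Finset C) (c : C) : ℕ :=
  (Finset.univ.filter fun k => c ∈ ψ k).card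

/-- Data rate of source `n`: sum over its chosen radios of capacity shared equally. -/
noncomputable def rate {N : ℕ} {C : Type*} [Fintype C] [DecidableEq C]
    (cap : Fin N → C → ℝ) (ψ : Fin N → Finset C) (n : Fin N) : ℝ :=
  ∑ c ∈ ψ n, cap n c / (occ ψ c : ℝ)

/-- Satisfaction of source `n` (sigmoid of the data rate). -/
noncomputable def sat {N : ℕ} {C : Type*} [Fintype C] [DecidableEq C]
    (cap : Fin N → C → ℝ) (lam nu : ℝ) (req : Fin N → ℝ)
    (ψ : Fin N → Finset C) (n : Fin N) : ℝ :=
  1 / (1 + Real.exp (-lam * (rate cap ψ n - req n + nu / lam)))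

/-- Global satisfaction `Λ`. -/
noncomputable def glob {N : ℕ} {C : Type*} [Fintype C] [DecidableEq C]
    (cap : Fin N → C → ℝ) (lam nu : ℝ) (req : Fin N → ℝ)
    (ψ : Fin N → Finset C) : ℝ :=
  ∑ n, sat cap lam nu req ψ n

/-- Relay utility `U_n`. -/
noncomputable def relU {N : ℕ} {C : Type*} [Fintype C] [DecidableEq C]
    (cap : Fin N → C → ℝ) (lam nu : ℝ) (req : Fin N → ℝ)
    (n : Fin N) (ψ : Fin N → Finset C) : ℝ :=
  sat cap lam nu req ψ n +
    ∑ k ∈ Finset.univ.erase n,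
      (sat cap lam nu req ψ k - sat cap lam nu req (Function.update ψ n ∅) k)

/-- `Λ` is an exact potential for the relay utilities `U_n`. -/
theorem stmt0 {N : ℕ} {C : Type*} [Fintype C] [DecidableEq C]
    (cap : Fin N → C → ℝ) (hcap : ∀ n c, 0 ≤ cap n c)
    (lam nu : ℝ) (hlam : 0 < lam) (hnu : 0 < nu) (req : Fin N → ℝ)
    (n : Fin N) (ψ ψ' : Fin N → Finset C)
    (hagree : ∀ k : Fin N, k ≠ n → ψ' k = ψ k) :
    relU cap lam nu req n ψ' - relU cap lam nu req n ψ =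
      glob cap lam nu req ψ' - glob cap lam nu req ψ := by
  have hupd : Function.update ψ' n (∅ : Finset C) = Function.update ψ n ∅ := by
    funext k
    by_cases hk : k = n
    · subst hk; simp
    · simp [Function.update_of_ne hk, hagree k hk]
  unfold relU glob
  rw [hupd, ← Finset.add_sum_erase Finset.univ _ (Finset.mem_univ n),
    ← Finset.add_sum_erase Finset.univ (sat cap lam nu req ψ) (Finset.mem_univ n),
    Finset.sum_sub_distrib, Finset.sum_sub_distrib]
  ring
end

section
/- Suppose each source n has a quota α_n, and call a profile ψ admissible if |ψ_n| ≤ α_n for every n. If an admissible profile ψ is such that no source n can strictly increase its relay utility U_n by a unilateral admissible deviation (replacing ψ_n by any ψ'_n ⊆ C with |ψ'_n| ≤ α_n while all other coordinates are unchanged), then ψ is a global stable matching: no source n can strictly increase the global satisfaction Λ by a unilateral admissible deviation. -/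
open Real Finset

/-- if no unilateral admissible deviation improves a source's relay
utility, then none improves the global satisfaction. -/
theorem stmt1 {N : ℕ} {C : Type*} [Fintype C] [DecidableEq C]
    (cap : Fin N → C → ℝ) (hcap : ∀ n c, 0 ≤ cap n c)
    (lam nu : ℝ) (hlam : 0 < lam) (hnu : 0 < nu) (req : Fin N → ℝ)
    (α : Fin N → ℕ) (ψ : Fin N → Finset C)
    (hadm : ∀ n, (ψ n).card ≤ α n)
    (hstable : ∀ (n : Fin N) (s : Finset C), s.card ≤ α n →
      ¬ relU cap lam nu req n ψ < relU cap lam nu req n (Function.update ψ n s)) :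
    ∀ (n : Fin N) (s : Finset C), s.card ≤ α n →
      ¬ glob cap lam nu req ψ < glob cap lam nu req (Function.update ψ n s) := by
  intro n s hs hlt
  apply hstable n s hs
  have hg : ∀ φ : Fin N → Finset C, glob cap lam nu req φ =
      relU cap lam nu req n φ +
        ∑ k ∈ Finset.univ.erase n, sat cap lam nu req (Function.update φ n ∅) k := by
    intro φ
    unfold glob relU
    rw [Finset.sum_sub_distrib, ← Finset.add_sum_erase _ _ (Finset.mem_univ n)]
    ring
  have e : Function.update (Function.update ψ n s) n ∅ = Function.update ψ n ∅ :=
    Function.update_idem ..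
  have h1 := hg ψ
  have h2 := hg (Function.update ψ n s)
  rw [e] at h2
  linarith
end

section
/- Suppose each source n has a quota α_n, and call a profile ψ admissible if |ψ_n| ≤ α_n for every n. If an admissible profile ψ is a global stable matching (no source n can strictly increase the global satisfaction Λ by a unilateral admissible deviation), then no source n can strictly increase its relay utility U_n by a unilateral admissible deviation. -/
open Real Finset

lemma relU_eq_glob {N : ℕ} {C : Type*} [Fintype C] [DecidableEq C]
    (cap : Fin N → C → ℝ) (lam nu : ℝ) (req : Fin N → ℝ)
    (n : Fin N) (ψ : Fin N → Finset C) :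
    relU cap lam nu req n ψ = glob cap lam nu req ψ -
      ∑ k ∈ Finset.univ.erase n, sat cap lam nu req (Function.update ψ n ∅) k := by
  unfold relU glob
  rw [Finset.sum_sub_distrib, ← Finset.add_sum_erase _ _ (Finset.mem_univ n)]
  ring

/-- if no unilateral admissible deviation improves the global
satisfaction, then none improves any source's relay utility. -/
theorem stmt2 {N : ℕ} {C : Type*} [Fintype C] [DecidableEq C]
    (cap : Fin N → C → ℝ) (hcap : ∀ n c, 0 ≤ cap n c)
    (lam nu : ℝ) (hlam : 0 < lam) (hnu : 0 < nu) (req : Fin N → ℝ)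
    (α : Fin N → ℕ) (ψ : Fin N → Finset C)
    (hadm : ∀ n, (ψ n).card ≤ α n)
    (hstable : ∀ (n : Fin N) (s : Finset C), s.card ≤ α n →
      ¬ glob cap lam nu req ψ < glob cap lam nu req (Function.update ψ n s)) :
    ∀ (n : Fin N) (s : Finset C), s.card ≤ α n →
      ¬ relU cap lam nu req n ψ < relU cap lam nu req n (Function.update ψ n s) := by
  intro n s hs h
  apply hstable n s hs
  rw [relU_eq_glob, relU_eq_glob, Function.update_idem] at h
  linarith
end

section
/- Suppose each source n has a quota α_n, and call a profile ψ admissible if |ψ_n| ≤ α_n for every n. Then there exists an admissible profile ψ* that is a global stable matching, i.e., for every source n and every ψ'_n ⊆ C with |ψ'_n| ≤ α_n, replacing the n-th coordinate of ψ* by ψ'_n does not increase the global satisfaction: Λ(ψ'_n, ψ*_{−n}) ≤ Λ(ψ*). In particular, the game possesses at least one stable matching. -/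
open Real Finset

/-- a global stable matching (admissible profile maximizing `Λ`
against all unilateral admissible deviations) exists. -/
theorem stmt3 {N : ℕ} {C : Type*} [Fintype C] [DecidableEq C]
    (cap : Fin N → C → ℝ) (hcap : ∀ n c, 0 ≤ cap n c)
    (lam nu : ℝ) (hlam : 0 < lam) (hnu : 0 < nu) (req : Fin N → ℝ)
    (α : Fin N → ℕ) :
    ∃ ψ : Fin N → Finset C, (∀ n, (ψ n).card ≤ α n) ∧
      ∀ (n : Fin N) (s : Finset C), s.card ≤ α n →
        glob cap lam nu req (Function.update ψ n s) ≤ glob cap lam nu req ψ := by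
  classical
  have hne : (Finset.univ.filter fun ψ : Fin N → Finset C => ∀ n, (ψ n).card ≤ α n).Nonempty := by
    refine ⟨fun _ => ∅, ?_⟩
    simp
  obtain ⟨ψ, hψ, hmax⟩ := Finset.exists_max_image _ (glob cap lam nu req) hne
  simp only [Finset.mem_filter, Finset.mem_univ, true_and] at hψ
  refine ⟨ψ, hψ, fun n s hs => ?_⟩
  apply hmax
  simp only [Finset.mem_filter, Finset.mem_univ, true_and]
  intro k
  rcases eq_or_ne k n with rfl | hk
  · simpa using hs
  · simpa [Function.update_of_ne hk] using hψ k
end
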